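/- arXiv:2402.02731 — 2 statements merged into one kernel-verified Lean document; each statement's English description precedes it below -/
import Mathlib

section
/- Let {x_t} be generated by x_{t+1} = x_t ⊙ exp(−(1/(|1−α|+1)) x_t ⊙ ∇g_α(x_t)) with x₁ ∈ Δ^N_+. Then for any T ∈ N, f_α(x̄_{T+1}) − f_α(x*) ≤ (2(|1−α|+1)/T) · sup_t ‖x* ⊘ x_t − 1‖₂², where x* minimizes f_α over Δ^N_+ and x̄ = x/‖x‖₁. -/
open scoped BigOperators

/-- `f_α(x) = E_p[D_α(p‖x)]` for a random probability vector `p` taking finitely many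
values `p k` with probabilities `w k`, where
`D_α(q‖x) = (α-1)⁻¹ * log ⟨q^α, x^(1-α)⟩` (entrywise real powers). -/
noncomputable def falpha {N M : ℕ} (α : ℝ) (w : Fin M → ℝ) (p : Fin M → Fin N → ℝ)
    (x : Fin N → ℝ) : ℝ :=
  ∑ k, w k * ((α - 1)⁻¹ * Real.log (∑ i, p k i ^ α * x i ^ (1 - α)))

/-- `g_α(x) = ⟨1, x⟩ + f_α(x)`. -/
noncomputable def galpha {N M : ℕ} (α : ℝ) (w : Fin M → ℝ) (p : Fin M → Fin N → ℝ)
    (x : Fin N → ℝ) : ℝ :=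
  (∑ i, x i) + falpha α w p x


/-!
On `{0 < x ≤ 1}`, `g_α` is convex and geodesically `L`-smooth for the metric `dx / x`, with
`L = |1-α| + 1`. In the coordinates `log x` each Rényi term `D_α(q‖·)` is `(α-1)⁻¹` times a
log-sum-exp, and both properties reduce to inequalities for the escort distribution
`∝ q^α x^(1-α)`: Bernoulli (`α < 1`) or Jensen (`α > 1`) for convexity, Jensen (`α < 1`) or
Hoeffding's lemma (`α > 1`) for smoothness with constant `|1-α|`. The linear part `⟨1, x⟩` adds
`1` to `L` because the step size `1/L` keeps the iterates in `x ≤ 1`.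

For `δ_t = g(x_t) - g(x*)`, smoothness gives `δ_{t+1} ≤ δ_t - ‖x_t ⊙ ∇g(x_t)‖² / 2L`, while
convexity and Cauchy–Schwarz give `δ_t ≤ ‖x_t ⊙ ∇g(x_t)‖ ‖x* ⊘ x_t - 1‖`; hence
`δ_t² ≤ 2LC (δ_t - δ_{t+1})` and `T δ_T ≤ 2LC`. Finally `f(x / ‖x‖₁) = f(x) + log ‖x‖₁ ≤ g(x) - 1`
and `g(x*) = 1 + f(x*)`, so the gap of `f` at the normalized iterate is at most `δ_T`.
-/

open Real Finset

section ProbabilityVector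

variable {ι : Type*} [Fintype ι] {q : ι → ℝ}

theorem sum_mul_log_le_log_sum_mul (hq : ∀ i, 0 ≤ q i) (hq1 : ∑ i, q i = 1) {u : ι → ℝ}
    (hu : ∀ i, 0 < u i) : ∑ i, q i * log (u i) ≤ log (∑ i, q i * u i) :=
  strictConcaveOn_log_Ioi.concaveOn.le_map_sum (fun i _ => hq i) hq1 (fun i _ => hu i)

open MeasureTheory ProbabilityTheory in
/-- Hoeffding's lemma for the law `q` of `v`, whose range lies in `[-‖v‖₂, ‖v‖₂]`. -/
theorem log_sum_mul_exp_le (hq : ∀ i, 0 ≤ q i) (hq1 : ∑ i, q i = 1) (v : ι → ℝ) :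
    log (∑ i, q i * exp (v i)) ≤ ∑ i, q i * v i + (∑ i, v i ^ 2) / 2 := by
  let _ : MeasurableSpace ι := ⊤
  let P : PMF ι := PMF.ofFintype (fun i => ENNReal.ofReal (q i)) (by
    rw [← ENNReal.ofReal_sum_of_nonneg (fun i _ => hq i), hq1, ENNReal.ofReal_one])
  have hint (f : ι → ℝ) : ∫ i, f i ∂P.toMeasure = ∑ i, q i * f i := by
    simp [P, PMF.integral_eq_sum, hq]
  set m := √(∑ i, v i ^ 2)
  have hv (i : ι) : v i ∈ Set.Icc (-m) m :=
    abs_le.mp (abs_le_sqrt (single_le_sum (fun j _ => sq_nonneg (v j)) (mem_univ i)))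
  have hmgf := (hasSubgaussianMGF_of_mem_Icc (measurable_of_finite v).aemeasurable
    (ae_of_all P.toMeasure hv)).mgf_le 1
  have hm : (((‖m - -m‖₊ / 2) ^ 2 : NNReal) : ℝ) = ∑ i, v i ^ 2 := by
    simp [m, ← two_mul, sq_sqrt (sum_nonneg fun i _ => sq_nonneg (v i))]
  simp only [mgf, hint, one_mul, one_pow, mul_one, hm, exp_sub, mul_div_assoc', ← sum_div]
    at hmgf
  obtain ⟨j, -, hj⟩ := exists_ne_zero_of_sum_ne_zero (hq1 ▸ one_ne_zero : ∑ i, q i ≠ 0)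
  have hpos : 0 < ∑ i, q i * exp (v i) :=
    sum_pos' (fun i _ => mul_nonneg (hq i) (exp_pos _).le)
      ⟨j, mem_univ j, mul_pos ((hq j).lt_of_ne' hj) (exp_pos _)⟩
  rw [div_le_iff₀ (exp_pos _), ← exp_add, ← log_le_iff_le_exp hpos] at hmgf
  linarith

end ProbabilityVector

section Scalar

theorem exp_le_one_add_add_sq_div_two {u : ℝ} (hu : u ≤ 0) : exp u ≤ 1 + u + u ^ 2 / 2 := by
  have h := quadratic_le_exp_of_nonneg (neg_nonneg.2 hu)
  have hexp : exp u * exp (-u) = 1 := by rw [← exp_add, add_neg_cancel, exp_zero]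
  nlinarith [mul_le_mul_of_nonneg_left h (exp_pos u).le, sq_nonneg (u ^ 2)]

theorem one_sub_one_add_mul_exp_neg_le {u : ℝ} (hu : 0 ≤ u) :
    1 - (1 + u) * exp (-u) ≤ u ^ 2 / 2 := by
  let F : ℝ → ℝ := fun s => s ^ 2 / 2 + (1 + s) * exp (-s)
  have hF (s : ℝ) : HasDerivAt F (s * (1 - exp (-s))) s := by
    refine (((hasDerivAt_pow 2 s).div_const 2).fun_add
      (((hasDerivAt_id s).const_add 1).fun_mul (hasDerivAt_neg s).exp)).congr_deriv ?_
    simp only [id, Nat.cast_ofNat]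
    ring
  have hmono : MonotoneOn F (Set.Ici 0) := by
    refine monotoneOn_of_deriv_nonneg (convex_Ici 0)
      (fun s _ => (hF s).continuousAt.continuousWithinAt)
      (fun s _ => (hF s).differentiableAt.differentiableWithinAt) fun s hs => ?_
    rw [interior_Ici] at hs
    rw [(hF s).deriv]
    exact mul_nonneg hs.out.le (sub_nonneg.2 (exp_le_one_iff.2 (neg_nonpos.2 hs.out.le)))
  have := hmono Set.self_mem_Ici hu hu
  norm_num [F] at this
  linarith

/-- `y ↦ y` is geodesically `1`-smooth on `y ≤ 1` for the metric `dy / y`. -/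
theorem mul_exp_le_of_mul_exp_le_one {y u : ℝ} (hy : 0 ≤ y) (hy1 : y ≤ 1)
    (hyu : y * exp u ≤ 1) : y * exp u ≤ y + y * u + u ^ 2 / 2 := by
  rcases le_or_gt u 0 with hu | hu
  · nlinarith [exp_le_one_add_add_sq_div_two hu, sq_nonneg u]
  · have hexp : exp u * exp (-u) = 1 := by rw [← exp_add, add_neg_cancel, exp_zero]
    have hye : y ≤ exp (-u) := by nlinarith [exp_pos (-u)]
    nlinarith [one_sub_one_add_mul_exp_neg_le hu.le, add_one_le_exp u,
      mul_le_mul_of_nonneg_right hye (by linarith [add_one_le_exp u] : 0 ≤ exp u - 1 - u)]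

theorem mul_exp_neg_mul_sub_le_one {y r η : ℝ} (hy : 0 ≤ y) (hy1 : y ≤ 1) (hr : r ≤ 1)
    (hη : 0 ≤ η) (hη1 : η ≤ 1) : y * exp (-η * (y - r)) ≤ 1 :=
  calc y * exp (-η * (y - r)) ≤ y * exp (1 - y) := by
        gcongr
        rcases le_total y r with h | h <;> nlinarith
    _ ≤ exp (y - 1) * exp (1 - y) := by gcongr; linarith [add_one_le_exp (y - 1)]
    _ = 1 := by rw [← exp_add, sub_add_sub_cancel, sub_self, exp_zero]

theorem nat_mul_le_of_sq_le_mul_sub {δ : ℕ → ℝ} {D : ℝ} (hD : 0 ≤ D) (hδ : ∀ t, 0 ≤ δ t)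
    (hanti : ∀ t, δ (t + 1) ≤ δ t) (hsq : ∀ t, δ t ^ 2 ≤ D * (δ t - δ (t + 1))) (T : ℕ) :
    T * δ T ≤ D := by
  induction T with
  | zero => simpa using hD
  | succ t ih =>
    rcases (hδ t).eq_or_lt with h0 | h0
    · have : δ (t + 1) = 0 := le_antisymm (h0 ▸ hanti t) (hδ _)
      simpa [this] using hD
    · -- `t δ_t δ_{t+1} ≤ D δ_{t+1}` and `δ_t δ_{t+1} ≤ δ_t² ≤ D (δ_t - δ_{t+1})` add up.
      have h : (t + 1 : ℝ) * δ (t + 1) * δ t ≤ D * δ t := by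
        nlinarith [mul_le_mul_of_nonneg_right ih (hδ (t + 1)), hanti t, hδ (t + 1), hsq t]
      push_cast
      exact le_of_mul_le_mul_right h h0

end Scalar

section Renyi

variable {ι : Type*} [Fintype ι]

noncomputable def renyiSum (α : ℝ) (q x : ι → ℝ) : ℝ := ∑ i, q i ^ α * x i ^ (1 - α)

noncomputable def renyiDiv (α : ℝ) (q x : ι → ℝ) : ℝ := (α - 1)⁻¹ * log (renyiSum α q x)

/-- `-escort α q x i / x i` is `∂ᵢ D_α(q‖x)`. -/
noncomputable def escort (α : ℝ) (q x : ι → ℝ) (i : ι) : ℝ :=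
  q i ^ α * x i ^ (1 - α) / renyiSum α q x

variable {α : ℝ} {q x : ι → ℝ}

theorem renyiSum_pos [Nonempty ι] (hq : ∀ i, 0 < q i) (hx : ∀ i, 0 < x i) :
    0 < renyiSum α q x :=
  sum_pos (fun i _ => mul_pos (rpow_pos_of_pos (hq i) _) (rpow_pos_of_pos (hx i) _))
    univ_nonempty

theorem escort_pos [Nonempty ι] (hq : ∀ i, 0 < q i) (hx : ∀ i, 0 < x i) (i : ι) :
    0 < escort α q x i :=
  div_pos (mul_pos (rpow_pos_of_pos (hq i) _) (rpow_pos_of_pos (hx i) _)) (renyiSum_pos hq hx)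

theorem sum_escort [Nonempty ι] (hq : ∀ i, 0 < q i) (hx : ∀ i, 0 < x i) :
    ∑ i, escort α q x i = 1 := by
  simp only [escort, ← sum_div]
  exact div_self (renyiSum_pos hq hx).ne'

theorem escort_le_one [Nonempty ι] (hq : ∀ i, 0 < q i) (hx : ∀ i, 0 < x i) (i : ι) :
    escort α q x i ≤ 1 :=
  sum_escort hq hx ▸ single_le_sum (fun j _ => (escort_pos hq hx j).le) (mem_univ i)

theorem renyiSum_mul [Nonempty ι] (hq : ∀ i, 0 < q i) (hx : ∀ i, 0 < x i) {t : ι → ℝ}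
    (ht : ∀ i, 0 ≤ t i) :
    renyiSum α q (fun i => x i * t i) = renyiSum α q x * ∑ i, escort α q x i * t i ^ (1 - α) := by
  have hS := (renyiSum_pos (α := α) hq hx).ne'
  rw [renyiSum, mul_sum]
  refine sum_congr rfl fun i _ => ?_
  rw [mul_rpow (hx i).le (ht i), escort]
  field_simp

theorem renyiDiv_mul [Nonempty ι] (hq : ∀ i, 0 < q i) (hx : ∀ i, 0 < x i) {t : ι → ℝ}
    (ht : ∀ i, 0 < t i) :
    renyiDiv α q (fun i => x i * t i) =
      renyiDiv α q x + (α - 1)⁻¹ * log (∑ i, escort α q x i * t i ^ (1 - α)) := by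
  have hZ : 0 < ∑ i, escort α q x i * t i ^ (1 - α) :=
    sum_pos (fun i _ => mul_pos (escort_pos hq hx i) (rpow_pos_of_pos (ht i) _)) univ_nonempty
  rw [renyiDiv, renyiSum_mul hq hx fun i => (ht i).le,
    log_mul (renyiSum_pos hq hx).ne' hZ.ne', renyiDiv, mul_add]

theorem renyiDiv_sub_le [Nonempty ι] (hα : 0 ≤ α) (hα1 : α ≠ 1) (hq : ∀ i, 0 < q i)
    (hx : ∀ i, 0 < x i) {y : ι → ℝ} (hy : ∀ i, 0 < y i) :
    renyiDiv α q x - ∑ i, escort α q x i * (y i / x i - 1) ≤ renyiDiv α q y := by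
  set t : ι → ℝ := fun i => y i / x i
  have ht (i : ι) : 0 < t i := div_pos (hy i) (hx i)
  have hxt : (fun i => x i * t i) = y := funext fun i => mul_div_cancel₀ _ (hx i).ne'
  set e := escort α q x
  have he (i : ι) : 0 ≤ e i := (escort_pos hq hx i).le
  have he1 : ∑ i, e i = 1 := sum_escort hq hx
  set E := ∑ i, e i * (t i - 1)
  set Z := ∑ i, e i * t i ^ (1 - α)
  have hZ : 0 < Z := sum_pos (fun i _ => mul_pos (escort_pos hq hx i) (rpow_pos_of_pos (ht i) _))
    univ_nonempty
  have hE : (α - 1)⁻¹ * ((1 - α) * E) = -E := by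
    field_simp [sub_ne_zero.2 hα1]
    ring
  rw [← hxt, renyiDiv_mul hq hx ht, sub_eq_add_neg, add_le_add_iff_left, ← hE]
  rcases hα1.lt_or_gt with hlt | hgt
  · refine mul_le_mul_of_nonpos_left ?_ (inv_nonpos.2 (by linarith))
    have hbern : Z ≤ 1 + (1 - α) * E := by
      calc Z ≤ ∑ i, e i * (1 + (1 - α) * (t i - 1)) := by
            refine sum_le_sum fun i _ => mul_le_mul_of_nonneg_left ?_ (he i)
            simpa using rpow_one_add_le_one_add_mul_self (by linarith [ht i] : -1 ≤ t i - 1)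
              (by linarith : 0 ≤ 1 - α) (by linarith)
        _ = ∑ i, e i + (1 - α) * E := by
            rw [mul_sum, ← sum_add_distrib]
            exact sum_congr rfl fun i _ => by ring
        _ = 1 + (1 - α) * E := by rw [he1]
    linarith [log_le_sub_one_of_pos hZ]
  · refine mul_le_mul_of_nonneg_left ?_ (inv_nonneg.2 (by linarith))
    calc (1 - α) * E ≤ ∑ i, e i * log (t i ^ (1 - α)) := by
          rw [mul_sum]
          refine sum_le_sum fun i _ => ?_
          rw [log_rpow (ht i)]
          nlinarith [mul_nonneg (he i) (mul_nonneg_of_nonpos_of_nonpos (sub_nonpos.2 hgt.le)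
            (sub_nonpos.2 (log_le_sub_one_of_pos (ht i))))]
      _ ≤ log Z := sum_mul_log_le_log_sum_mul he he1 fun i => rpow_pos_of_pos (ht i) _

theorem renyiDiv_mul_exp_le [Nonempty ι] (hα1 : α ≠ 1) (hq : ∀ i, 0 < q i)
    (hx : ∀ i, 0 < x i) (u : ι → ℝ) :
    renyiDiv α q (fun i => x i * exp (u i)) ≤
      renyiDiv α q x - ∑ i, escort α q x i * u i + |1 - α| * (∑ i, u i ^ 2) / 2 := by
  set e := escort α q x
  have he (i : ι) : 0 ≤ e i := (escort_pos hq hx i).le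
  have he1 : ∑ i, e i = 1 := sum_escort hq hx
  have hv : ∑ i, e i * ((1 - α) * u i) = (1 - α) * ∑ i, e i * u i := by
    rw [mul_sum]
    exact sum_congr rfl fun i _ => by ring
  have hne : α - 1 ≠ 0 := sub_ne_zero.2 hα1
  rw [renyiDiv_mul hq hx fun i => exp_pos _]
  suffices (α - 1)⁻¹ * log (∑ i, e i * exp ((1 - α) * u i)) ≤
      -∑ i, e i * u i + |1 - α| * (∑ i, u i ^ 2) / 2 by
    simp_rw [← exp_mul, mul_comm (u _) (1 - α)]
    linarith
  have hS : (α - 1)⁻¹ * ((1 - α) * ∑ i, e i * u i) = -∑ i, e i * u i := by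
    field_simp
    ring
  rcases hα1.lt_or_gt with hlt | hgt
  · have hJ := sum_mul_log_le_log_sum_mul he he1 fun i => exp_pos ((1 - α) * u i)
    simp only [log_exp, hv] at hJ
    have hu2 : 0 ≤ |1 - α| * (∑ i, u i ^ 2) / 2 := by positivity
    linarith [mul_le_mul_of_nonpos_left hJ (inv_nonpos.2 (by linarith : α - 1 ≤ 0))]
  · have hH := log_sum_mul_exp_le he he1 fun i => (1 - α) * u i
    have hu2 : ∑ i, ((1 - α) * u i) ^ 2 = (α - 1) * ((α - 1) * ∑ i, u i ^ 2) := by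
      rw [mul_sum, mul_sum]
      exact sum_congr rfl fun i _ => by ring
    rw [hv, hu2] at hH
    have := mul_le_mul_of_nonneg_left hH (inv_nonneg.2 (by linarith : 0 ≤ α - 1))
    rw [mul_add, hS, mul_div_assoc', inv_mul_cancel_left₀ hne] at this
    rwa [abs_of_neg (by linarith : 1 - α < 0), neg_sub]

theorem hasFDerivAt_renyiSum (hx : ∀ i, 0 < x i) :
    HasFDerivAt (renyiSum α q)
      (∑ i, (q i ^ α * ((1 - α) * x i ^ (1 - α - 1))) •
        (ContinuousLinearMap.proj i : (ι → ℝ) →L[ℝ] ℝ)) x :=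
  HasFDerivAt.fun_sum fun i _ =>
    (((hasDerivAt_rpow_const (Or.inl (hx i).ne')).comp_hasFDerivAt x
      (hasFDerivAt_apply (𝕜 := ℝ) i x)).const_mul (q i ^ α)).congr_fderiv (smul_smul _ _ _)

end Renyi

section Mixture

variable {N M : ℕ} {α : ℝ} {w : Fin M → ℝ} {p : Fin M → Fin N → ℝ} {x y : Fin N → ℝ}

/-- `x ⊙ ∇f_α(x) = -escortMean α w p x`. -/
noncomputable def escortMean (α : ℝ) (w : Fin M → ℝ) (p : Fin M → Fin N → ℝ)
    (x : Fin N → ℝ) (i : Fin N) : ℝ :=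
  ∑ k, w k * escort α (p k) x i

theorem falpha_eq_sum_renyiDiv : falpha α w p x = ∑ k, w k * renyiDiv α (p k) x := rfl

theorem sum_escortMean_mul (a : Fin N → ℝ) :
    ∑ i, escortMean α w p x i * a i = ∑ k, w k * ∑ i, escort α (p k) x i * a i := by
  simp only [escortMean, sum_mul, mul_sum, mul_assoc]
  exact sum_comm

theorem escortMean_le_one [Nonempty (Fin N)] (hw : ∀ k, 0 ≤ w k) (hw1 : ∑ k, w k = 1)
    (hp : ∀ k i, 0 < p k i) (hx : ∀ i, 0 < x i) (i : Fin N) : escortMean α w p x i ≤ 1 :=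
  calc escortMean α w p x i ≤ ∑ k, w k * 1 :=
        sum_le_sum fun k _ => mul_le_mul_of_nonneg_left (escort_le_one (hp k) hx i) (hw k)
    _ = 1 := by simp [hw1]

theorem falpha_div [Nonempty (Fin N)] (hα1 : α ≠ 1) (hw1 : ∑ k, w k = 1)
    (hp : ∀ k i, 0 < p k i) (hx : ∀ i, 0 < x i) {s : ℝ} (hs : 0 < s) :
    falpha α w p (fun i => x i / s) = falpha α w p x + log s := by
  have hk (k : Fin M) : renyiDiv α (p k) (fun i => x i / s) = renyiDiv α (p k) x + log s := by
    simp_rw [div_eq_mul_inv]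
    rw [renyiDiv_mul (hp k) hx fun _ => inv_pos.2 hs, ← sum_mul,
      sum_escort (hp k) hx, one_mul, log_rpow (inv_pos.2 hs), log_inv]
    field_simp [sub_ne_zero.2 hα1]
    ring
  simp only [falpha_eq_sum_renyiDiv, hk, mul_add, sum_add_distrib, ← sum_mul, hw1, one_mul]

theorem falpha_sub_le [Nonempty (Fin N)] (hα : 0 ≤ α) (hα1 : α ≠ 1) (hw : ∀ k, 0 ≤ w k)
    (hp : ∀ k i, 0 < p k i) (hx : ∀ i, 0 < x i) (hy : ∀ i, 0 < y i) :
    falpha α w p x - ∑ i, escortMean α w p x i * (y i / x i - 1) ≤ falpha α w p y := by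
  rw [falpha_eq_sum_renyiDiv, falpha_eq_sum_renyiDiv, sum_escortMean_mul, ← sum_sub_distrib]
  exact sum_le_sum fun k _ => by
    rw [← mul_sub]
    exact mul_le_mul_of_nonneg_left (renyiDiv_sub_le hα hα1 (hp k) hx hy) (hw k)

theorem falpha_mul_exp_le [Nonempty (Fin N)] (hα1 : α ≠ 1) (hw : ∀ k, 0 ≤ w k)
    (hw1 : ∑ k, w k = 1) (hp : ∀ k i, 0 < p k i) (hx : ∀ i, 0 < x i) (u : Fin N → ℝ) :
    falpha α w p (fun i => x i * exp (u i)) ≤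
      falpha α w p x - ∑ i, escortMean α w p x i * u i + |1 - α| * (∑ i, u i ^ 2) / 2 := by
  calc falpha α w p (fun i => x i * exp (u i))
      ≤ ∑ k, w k * (renyiDiv α (p k) x - ∑ i, escort α (p k) x i * u i
          + |1 - α| * (∑ i, u i ^ 2) / 2) :=
        sum_le_sum fun k _ =>
          mul_le_mul_of_nonneg_left (renyiDiv_mul_exp_le hα1 (hp k) hx u) (hw k)
    _ = _ := by
        simp only [falpha_eq_sum_renyiDiv, sum_escortMean_mul, mul_add, mul_sub, sum_add_distrib,
          sum_sub_distrib, ← sum_mul, hw1, one_mul]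

/-- Convexity of `g_α`: the right side is `⟨∇g_α(x), x - y⟩`. -/
theorem galpha_sub_le [Nonempty (Fin N)] (hα : 0 ≤ α) (hα1 : α ≠ 1) (hw : ∀ k, 0 ≤ w k)
    (hp : ∀ k i, 0 < p k i) (hx : ∀ i, 0 < x i) (hy : ∀ i, 0 < y i) :
    galpha α w p x - galpha α w p y ≤
      ∑ i, (x i - escortMean α w p x i) * (1 - y i / x i) := by
  have h (i : Fin N) : (x i - escortMean α w p x i) * (1 - y i / x i) =
      x i - y i + escortMean α w p x i * (y i / x i - 1) := by
    field_simp [(hx i).ne']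
    ring
  simp only [h, sum_add_distrib, sum_sub_distrib, galpha]
  linarith [falpha_sub_le hα hα1 hw hp hx hy]

theorem galpha_mul_exp_le [Nonempty (Fin N)] (hα1 : α ≠ 1) (hw : ∀ k, 0 ≤ w k)
    (hw1 : ∑ k, w k = 1) (hp : ∀ k i, 0 < p k i) (hx : ∀ i, 0 < x i) (hx1 : ∀ i, x i ≤ 1)
    {u : Fin N → ℝ} (hxu : ∀ i, x i * exp (u i) ≤ 1) :
    galpha α w p (fun i => x i * exp (u i)) ≤
      galpha α w p x + ∑ i, (x i - escortMean α w p x i) * u i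
        + (|1 - α| + 1) * (∑ i, u i ^ 2) / 2 := by
  have hlin : ∑ i, x i * exp (u i) ≤ ∑ i, (x i + x i * u i + u i ^ 2 / 2) :=
    sum_le_sum fun i _ => mul_exp_le_of_mul_exp_le_one (hx i).le (hx1 i) (hxu i)
  simp only [sum_add_distrib, ← sum_div] at hlin
  simp only [galpha, sub_mul, sum_sub_distrib]
  linarith [falpha_mul_exp_le hα1 hw hw1 hp hx u]

theorem mul_fderiv_galpha_single [Nonempty (Fin N)] (hα1 : α ≠ 1) (hp : ∀ k i, 0 < p k i)
    (hx : ∀ i, 0 < x i) (i : Fin N) :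
    x i * fderiv ℝ (galpha α w p) x (Pi.single i 1) = x i - escortMean α w p x i := by
  have hg : HasFDerivAt (galpha α w p) _ x :=
    (HasFDerivAt.fun_sum fun j _ => hasFDerivAt_apply (𝕜 := ℝ) j x).add
      (HasFDerivAt.fun_sum fun k _ => (((hasFDerivAt_renyiSum (q := p k) hx).log
        (renyiSum_pos (hp k) hx).ne').const_mul (α - 1)⁻¹).const_mul (w k))
  rw [hg.fderiv]
  simp only [sub_sub_cancel_left, add_apply, _root_.sum_apply, smul_apply,
    ContinuousLinearMap.proj_apply, Pi.single_apply, smul_eq_mul, mul_ite, mul_one, mul_zero,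
    sum_ite_eq', mem_univ, if_true]
  have hpow : x i ^ (1 - α) = x i * x i ^ (-α) := by
    rw [sub_eq_add_neg, rpow_add (hx i), rpow_one]
  rw [mul_add, mul_one, mul_sum, escortMean, sub_eq_add_neg (x i), ← sum_neg_distrib]
  refine congrArg _ (sum_congr rfl fun k _ => ?_)
  rw [escort, hpow]
  field_simp [sub_ne_zero.2 hα1, (renyiSum_pos (α := α) (hp k) hx).ne']
  ring

end Mixture

section Descent

variable {N M : ℕ} {α : ℝ} {w : Fin M → ℝ} {p : Fin M → Fin N → ℝ} {x y : Fin N → ℝ}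

/-- One step `x ⊙ exp(-L⁻¹ x ⊙ ∇g_α(x))` of Riemannian gradient descent, `L = |1-α|+1`. -/
noncomputable def rgdStep (α : ℝ) (w : Fin M → ℝ) (p : Fin M → Fin N → ℝ) (x : Fin N → ℝ)
    (i : Fin N) : ℝ :=
  x i * exp (-(|1 - α| + 1)⁻¹ * (x i - escortMean α w p x i))

theorem rgdStep_pos (hx : ∀ i, 0 < x i) (i : Fin N) : 0 < rgdStep α w p x i :=
  mul_pos (hx i) (exp_pos _)

theorem rgdStep_le_one [Nonempty (Fin N)] (hw : ∀ k, 0 ≤ w k) (hw1 : ∑ k, w k = 1)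
    (hp : ∀ k i, 0 < p k i) (hx : ∀ i, 0 < x i) (hx1 : ∀ i, x i ≤ 1) (i : Fin N) :
    rgdStep α w p x i ≤ 1 :=
  mul_exp_neg_mul_sub_le_one (hx i).le (hx1 i) (escortMean_le_one hw hw1 hp hx i)
    (by positivity) (inv_le_one_of_one_le₀ (le_add_of_nonneg_left (abs_nonneg _)))

theorem galpha_rgdStep_le [Nonempty (Fin N)] (hα1 : α ≠ 1) (hw : ∀ k, 0 ≤ w k)
    (hw1 : ∑ k, w k = 1) (hp : ∀ k i, 0 < p k i) (hx : ∀ i, 0 < x i) (hx1 : ∀ i, x i ≤ 1) :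
    galpha α w p (rgdStep α w p x) ≤
      galpha α w p x - (∑ i, (x i - escortMean α w p x i) ^ 2) / (2 * (|1 - α| + 1)) := by
  have h := galpha_mul_exp_le hα1 hw hw1 hp hx hx1 (rgdStep_le_one (α := α) hw hw1 hp hx hx1)
  set L := |1 - α| + 1
  set H := ∑ i, (x i - escortMean α w p x i) ^ 2
  have hL : 0 < L := by positivity
  have h1 : ∑ i, (x i - escortMean α w p x i) * (-L⁻¹ * (x i - escortMean α w p x i)) =
      -L⁻¹ * H := by
    rw [mul_sum]
    exact sum_congr rfl fun i _ => by ring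
  have h2 : ∑ i, (-L⁻¹ * (x i - escortMean α w p x i)) ^ 2 = L⁻¹ ^ 2 * H := by
    rw [mul_sum]
    exact sum_congr rfl fun i _ => by ring
  rw [h1, h2] at h
  calc galpha α w p (rgdStep α w p x) ≤ _ := h
    _ = _ := by field_simp; ring

theorem galpha_rgdStep_le_self [Nonempty (Fin N)] (hα1 : α ≠ 1) (hw : ∀ k, 0 ≤ w k)
    (hw1 : ∑ k, w k = 1) (hp : ∀ k i, 0 < p k i) (hx : ∀ i, 0 < x i) (hx1 : ∀ i, x i ≤ 1) :
    galpha α w p (rgdStep α w p x) ≤ galpha α w p x :=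
  (galpha_rgdStep_le hα1 hw hw1 hp hx hx1).trans (sub_le_self _ (by positivity))

theorem sq_galpha_sub_le [Nonempty (Fin N)] (hα : 0 ≤ α) (hα1 : α ≠ 1) (hw : ∀ k, 0 ≤ w k)
    (hw1 : ∑ k, w k = 1) (hp : ∀ k i, 0 < p k i) (hx : ∀ i, 0 < x i) (hx1 : ∀ i, x i ≤ 1)
    (hy : ∀ i, 0 < y i) (hgap : galpha α w p y ≤ galpha α w p x) {C : ℝ}
    (hC : ∑ i, (y i / x i - 1) ^ 2 ≤ C) :
    (galpha α w p x - galpha α w p y) ^ 2 ≤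
      2 * (|1 - α| + 1) * C * (galpha α w p x - galpha α w p (rgdStep α w p x)) := by
  set H := ∑ i, (x i - escortMean α w p x i) ^ 2
  have hH : H ≤ 2 * (|1 - α| + 1) * (galpha α w p x - galpha α w p (rgdStep α w p x)) := by
    have := galpha_rgdStep_le hα1 hw hw1 hp hx hx1
    rw [le_sub_comm, div_le_iff₀ (by positivity)] at this
    linarith
  calc (galpha α w p x - galpha α w p y) ^ 2
      ≤ (∑ i, (x i - escortMean α w p x i) * (1 - y i / x i)) ^ 2 :=
        pow_le_pow_left₀ (sub_nonneg.2 hgap) (galpha_sub_le hα hα1 hw hp hx hy) 2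
    _ ≤ H * ∑ i, (y i / x i - 1) ^ 2 := by
        simp only [sub_sq_comm _ (1 : ℝ)]
        exact sum_mul_sq_le_sq_mul_sq _ _ _
    _ ≤ 2 * (|1 - α| + 1) * (galpha α w p x - galpha α w p (rgdStep α w p x)) * C :=
        mul_le_mul hH hC (sum_nonneg fun i _ => sq_nonneg _) (mul_nonneg (by positivity)
          (sub_nonneg.2 (galpha_rgdStep_le_self hα1 hw hw1 hp hx hx1)))
    _ = _ := by ring

theorem falpha_normalize_sub_le [Nonempty (Fin N)] (hα1 : α ≠ 1) (hw1 : ∑ k, w k = 1)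
    (hp : ∀ k i, 0 < p k i) (hx : ∀ i, 0 < x i) (hy1 : ∑ i, y i = 1) :
    falpha α w p (fun i => x i / ∑ j, x j) - falpha α w p y ≤
      galpha α w p x - galpha α w p y := by
  have hs : 0 < ∑ j, x j := sum_pos (fun j _ => hx j) univ_nonempty
  rw [falpha_div hα1 hw1 hp hx hs, galpha, galpha, hy1]
  linarith [log_le_sub_one_of_pos hs]

end Descent

theorem normalize_pos_and_sum_eq_one {ι : Type*} [Fintype ι] [Nonempty ι] {x : ι → ℝ}
    (hx : ∀ i, 0 < x i) :
    (∀ i, 0 < x i / ∑ j, x j) ∧ ∑ i, x i / ∑ j, x j = 1 := by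
  have hs : 0 < ∑ j, x j := sum_pos (fun j _ => hx j) univ_nonempty
  exact ⟨fun i => div_pos (hx i) hs, by rw [← sum_div, div_self hs.ne']⟩

/-- Non-asymptotic rate for the normalized RGD iterates: for `x_{t+1} = x_t ⊙
exp(-(1/(|1-α|+1)) x_t ⊙ ∇g_α(x_t))` started in the relative interior of the simplex,
`f_α(x̄_T) - f_α(x*) ≤ (2(|1-α|+1)/T) ⋅ sup_t ‖x* ⊘ x_t - 1‖₂²`, where `x*` minimizes `f_α`
over the simplex and `x̄ = x/‖x‖₁`. -/
theorem stmt_18 (N M : ℕ) (α : ℝ) (hα : 0 < α) (hα1 : α ≠ 1)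
    (w : Fin M → ℝ) (hw : ∀ k, 0 ≤ w k) (hw1 : ∑ k, w k = 1)
    (p : Fin M → Fin N → ℝ) (hp : ∀ k, (∀ i, 0 < p k i) ∧ ∑ i, p k i = 1)
    (x : ℕ → Fin N → ℝ) (h1 : (∀ i, 0 < x 0 i) ∧ ∑ i, x 0 i = 1)
    (hrec : ∀ t i, x (t + 1) i = x t i *
      Real.exp (-(|1 - α| + 1)⁻¹ * (x t i * fderiv ℝ (galpha α w p) (x t) (Pi.single i 1))))
    (xs : Fin N → ℝ) (hxs : (∀ i, 0 < xs i) ∧ ∑ i, xs i = 1)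
    (hmin : ∀ z : Fin N → ℝ, ((∀ i, 0 < z i) ∧ ∑ i, z i = 1) →
      falpha α w p xs ≤ falpha α w p z)
    (C : ℝ) (hC : ∀ t, ∑ i, (xs i / x t i - 1) ^ 2 ≤ C)
    (T : ℕ) (hT : 0 < T) :
    falpha α w p (fun i => x T i / ∑ j, x T j) - falpha α w p xs
      ≤ 2 * (|1 - α| + 1) / T * C := by
  obtain ⟨hx0, hx0_sum⟩ := h1
  obtain ⟨hxs, hxs_sum⟩ := hxs
  have hpos : ∀ k i, 0 < p k i := fun k => (hp k).1
  obtain ⟨i₀, -, -⟩ := exists_ne_zero_of_sum_ne_zero (hx0_sum ▸ one_ne_zero : ∑ i, x 0 i ≠ 0)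
  have : Nonempty (Fin N) := ⟨i₀⟩
  have hstep (t : ℕ) (ht : ∀ i, 0 < x t i) : x (t + 1) = rgdStep α w p (x t) :=
    funext fun i => by rw [hrec, mul_fderiv_galpha_single hα1 hpos ht]; rfl
  have hx (t : ℕ) : (∀ i, 0 < x t i) ∧ ∀ i, x t i ≤ 1 := by
    induction t with
    | zero => exact ⟨hx0, fun i => hx0_sum ▸ single_le_sum (fun j _ => (hx0 j).le) (mem_univ i)⟩
    | succ t ih =>
      rw [hstep t ih.1]
      exact ⟨rgdStep_pos ih.1, rgdStep_le_one hw hw1 hpos ih.1 ih.2⟩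
  set δ : ℕ → ℝ := fun t => galpha α w p (x t) - galpha α w p xs
  have hgap (t : ℕ) := falpha_normalize_sub_le hα1 hw1 hpos (hx t).1 hxs_sum
  have hδ (t : ℕ) : 0 ≤ δ t :=
    (sub_nonneg.2 (hmin _ (normalize_pos_and_sum_eq_one (hx t).1))).trans (hgap t)
  have hanti (t : ℕ) : δ (t + 1) ≤ δ t := by
    simp only [δ, hstep t (hx t).1]
    linarith [galpha_rgdStep_le_self hα1 hw hw1 hpos (hx t).1 (hx t).2]
  have hsq (t : ℕ) : δ t ^ 2 ≤ 2 * (|1 - α| + 1) * C * (δ t - δ (t + 1)) := by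
    simp only [δ, hstep t (hx t).1, sub_sub_sub_cancel_right]
    exact sq_galpha_sub_le hα.le hα1 hw hw1 hpos (hx t).1 (hx t).2 hxs (sub_nonneg.1 (hδ t)) (hC t)
  have hC0 : 0 ≤ C := (sum_nonneg fun i _ => sq_nonneg _).trans (hC 0)
  have hrate := nat_mul_le_of_sq_le_mul_sub (by positivity) hδ hanti hsq T
  calc _ ≤ δ T := hgap T
    _ ≤ 2 * (|1 - α| + 1) * C / T := by rw [le_div_iff₀ (by exact_mod_cast hT)]; linarith
    _ = _ := by ring
end

section
/- For α > 1 and fixed probability vector q ∈ Δ^N_+, along the Poincaré geodesic γ(t) = x^{1−t} ⊙ y^t the function φ(t) = log⟨q^α, γ(t)^{1−α}⟩ satisfies φ''(t) ≤ (1−α)² ‖log(y⊘x)‖₂² · (weighted-variance bound): specifically φ''(t) equals (1−α)² times the variance of log(y⊘x) under the probability weights w_i(t) ∝ q_i^α γ_i(t)^{1−α}, hence 0 ≤ φ''(t) ≤ (1−α)²‖log(y⊘x)‖₂², giving that D_α(q‖·) = φ/(α−1) is geodesically |1−α|-smooth. -/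
/-!
Writing `γ(s)ᵢ^(1-α) = xᵢ^(1-α) · exp((1-α) Lᵢ s)` with `Lᵢ = log(yᵢ/xᵢ)` turns `φ` into a
log-sum-exp `s ↦ log ∑ aᵢ exp(bᵢ s)`, a cumulant generating function: its second derivative is
the variance of `b` under the Gibbs weights `aᵢ exp(bᵢ s) / ∑ⱼ aⱼ exp(bⱼ s)`. A variance is
nonnegative (Cauchy–Schwarz) and bounded by the second moment, hence by `∑ bᵢ²` when every
weight is at most one.
-/

open Finset Real

section

variable {ι : Type*} [Fintype ι]

noncomputable def normalizeSum (u : ι → ℝ) (i : ι) : ℝ := u i / ∑ j, u j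

def weightedVariance (w v : ι → ℝ) : ℝ := ∑ i, w i * v i ^ 2 - (∑ i, w i * v i) ^ 2

lemma sum_normalizeSum_mul (u v : ι → ℝ) :
    ∑ i, normalizeSum u i * v i = (∑ i, u i * v i) / ∑ i, u i := by
  rw [sum_div]
  exact sum_congr rfl fun i _ => div_mul_eq_mul_div _ _ _

lemma normalizeSum_nonneg {u : ι → ℝ} (hu : ∀ i, 0 ≤ u i) (i : ι) : 0 ≤ normalizeSum u i :=
  div_nonneg (hu i) (sum_nonneg fun j _ => hu j)

lemma normalizeSum_le_one {u : ι → ℝ} (hu : ∀ i, 0 ≤ u i) (i : ι) : normalizeSum u i ≤ 1 :=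
  div_le_one_of_le₀ (single_le_sum (fun j _ => hu j) (mem_univ i)) (sum_nonneg fun j _ => hu j)

lemma sum_normalizeSum_le_one (u : ι → ℝ) : ∑ i, normalizeSum u i ≤ 1 := by
  simpa [normalizeSum, ← sum_div] using div_self_le_one (∑ i, u i)

lemma weightedVariance_const_mul (w v : ι → ℝ) (c : ℝ) :
    weightedVariance w (fun i => c * v i) = c ^ 2 * weightedVariance w v := by
  simp only [weightedVariance, mul_pow, mul_left_comm (w _), ← mul_sum]
  ring

lemma weightedVariance_nonneg {w : ι → ℝ} (hw : ∀ i, 0 ≤ w i) (hw1 : ∑ i, w i ≤ 1)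
    (v : ι → ℝ) : 0 ≤ weightedVariance w v := by
  have hsecond : 0 ≤ ∑ i, w i * v i ^ 2 := sum_nonneg fun i _ => mul_nonneg (hw i) (sq_nonneg _)
  have hcs : (∑ i, w i * v i) ^ 2 ≤ (∑ i, w i) * ∑ i, w i * v i ^ 2 :=
    sum_sq_le_sum_mul_sum_of_sq_le_mul _ (fun i _ => hw i)
      (fun i _ => mul_nonneg (hw i) (sq_nonneg _)) fun i _ => le_of_eq (by ring)
  unfold weightedVariance
  nlinarith

lemma weightedVariance_le_sum_sq {w : ι → ℝ} (hw : ∀ i, w i ≤ 1) (v : ι → ℝ) :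
    weightedVariance w v ≤ ∑ i, v i ^ 2 :=
  calc weightedVariance w v ≤ ∑ i, w i * v i ^ 2 :=
        sub_le_self _ (sq_nonneg _)
    _ ≤ ∑ i, v i ^ 2 :=
        sum_le_sum fun i _ => mul_le_of_le_one_left (sq_nonneg _) (hw i)

lemma hasDerivAt_sum_mul_exp (a b : ι → ℝ) (t : ℝ) :
    HasDerivAt (fun s => ∑ i, a i * exp (b i * s)) (∑ i, a i * b i * exp (b i * t)) t := by
  refine HasDerivAt.fun_sum fun i _ => ?_
  exact ((((hasDerivAt_id t).const_mul (b i)).exp).const_mul (a i)).congr_deriv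
    (by simp only [id, mul_one]; ring)

lemma deriv_log_sum_mul_exp [Nonempty ι] {a : ι → ℝ} (ha : ∀ i, 0 < a i) (b : ι → ℝ) :
    deriv (fun s => log (∑ i, a i * exp (b i * s))) =
      fun s => (∑ i, a i * b i * exp (b i * s)) / ∑ i, a i * exp (b i * s) := by
  funext s
  have hpos : 0 < ∑ i, a i * exp (b i * s) :=
    sum_pos (fun i _ => mul_pos (ha i) (exp_pos _)) univ_nonempty
  exact ((hasDerivAt_sum_mul_exp a b s).log hpos.ne').deriv

theorem deriv_deriv_log_sum_mul_exp {a : ι → ℝ} (ha : ∀ i, 0 < a i) (b : ι → ℝ) (t : ℝ) :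
    deriv (deriv fun s => log (∑ i, a i * exp (b i * s))) t =
      weightedVariance (normalizeSum fun i => a i * exp (b i * t)) b := by
  cases isEmpty_or_nonempty ι
  · simp [weightedVariance]
  have hpos : 0 < ∑ i, a i * exp (b i * t) :=
    sum_pos (fun i _ => mul_pos (ha i) (exp_pos _)) univ_nonempty
  rw [deriv_log_sum_mul_exp ha, ((hasDerivAt_sum_mul_exp (fun i => a i * b i) b t).fun_div
    (hasDerivAt_sum_mul_exp a b t) hpos.ne').deriv, weightedVariance, sum_normalizeSum_mul,
    sum_normalizeSum_mul]
  have hsecond : ∑ i, a i * b i * b i * exp (b i * t) = ∑ i, a i * exp (b i * t) * b i ^ 2 :=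
    sum_congr rfl fun i _ => by ring
  have hfirst : ∑ i, a i * b i * exp (b i * t) = ∑ i, a i * exp (b i * t) * b i :=
    sum_congr rfl fun i _ => by ring
  rw [hsecond, hfirst]
  generalize ∑ i, a i * exp (b i * t) * b i ^ 2 = M₂
  generalize ∑ i, a i * exp (b i * t) * b i = M₁
  generalize ∑ i, a i * exp (b i * t) = Z at hpos ⊢
  field_simp

end

lemma geodesic_rpow_eq_mul_exp {x y : ℝ} (hx : 0 < x) (hy : 0 < y) (p s : ℝ) :
    (x ^ (1 - s) * y ^ s) ^ p = x ^ p * exp (p * log (y / x) * s) := by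
  rw [rpow_def_of_pos hx, rpow_def_of_pos hy, ← exp_add, rpow_def_of_pos (exp_pos _), log_exp,
    rpow_def_of_pos hx, ← exp_add, log_div hy.ne' hx.ne']
  ring_nf

theorem stmt_19_general (N : ℕ) (α : ℝ)
    (q : Fin N → ℝ) (hq : ∀ i, 0 < q i)
    (x y : Fin N → ℝ) (hx : ∀ i, 0 < x i) (hy : ∀ i, 0 < y i) (t : ℝ) :
    let γ : ℝ → Fin N → ℝ := fun s i => x i ^ (1 - s) * y i ^ s
    let φ : ℝ → ℝ := fun s => Real.log (∑ i, q i ^ α * γ s i ^ (1 - α))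
    let wgt : ℝ → Fin N → ℝ :=
      fun s i => q i ^ α * γ s i ^ (1 - α) / ∑ j, q j ^ α * γ s j ^ (1 - α)
    deriv (deriv φ) t = (1 - α) ^ 2 *
        ((∑ i, wgt t i * Real.log (y i / x i) ^ 2)
          - (∑ i, wgt t i * Real.log (y i / x i)) ^ 2) ∧
    0 ≤ deriv (deriv φ) t ∧
    deriv (deriv φ) t ≤ (1 - α) ^ 2 * ∑ i, Real.log (y i / x i) ^ 2 := by
  intro γ φ wgt
  set L : Fin N → ℝ := fun i => log (y i / x i)
  set a : Fin N → ℝ := fun i => q i ^ α * x i ^ (1 - α)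
  have hγ : ∀ s i, q i ^ α * γ s i ^ (1 - α) = a i * exp ((1 - α) * L i * s) := fun s i => by
    rw [geodesic_rpow_eq_mul_exp (hx i) (hy i), ← mul_assoc]
  have hφ : φ = fun s => log (∑ i, a i * exp ((1 - α) * L i * s)) := by
    funext s; simp only [φ, hγ]
  have hwgt : wgt t = normalizeSum fun i => a i * exp ((1 - α) * L i * t) := by
    funext i; simp only [wgt, normalizeSum, hγ]
  have ha : ∀ i, 0 < a i := fun i => mul_pos (rpow_pos_of_pos (hq i) _) (rpow_pos_of_pos (hx i) _)
  have hu : ∀ i, 0 ≤ a i * exp ((1 - α) * L i * t) := fun i => (mul_pos (ha i) (exp_pos _)).le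
  have hvar : deriv (deriv φ) t = (1 - α) ^ 2 * weightedVariance (wgt t) L := by
    rw [hφ, deriv_deriv_log_sum_mul_exp ha, ← hwgt, weightedVariance_const_mul]
  refine ⟨hvar, ?_, ?_⟩ <;> rw [hvar, hwgt]
  · exact mul_nonneg (sq_nonneg _)
      (weightedVariance_nonneg (normalizeSum_nonneg hu) (sum_normalizeSum_le_one _) L)
  · exact mul_le_mul_of_nonneg_left (weightedVariance_le_sum_sq (normalizeSum_le_one hu) L)
      (sq_nonneg _)

/-- For `α > 1` and a fixed probability vector `q`, along the Poincaré geodesic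
`γ t = x^(1-t) ⊙ y^t`, the function `φ t = log ⟨q^α, γ(t)^(1-α)⟩` has second derivative equal
to `(1-α)²` times the variance of `log (y ⊘ x)` under the weights
`w_i(t) ∝ q_i^α γ_i(t)^(1-α)`; hence `0 ≤ φ'' t ≤ (1-α)² ‖log (y ⊘ x)‖₂²`. -/
theorem stmt_19 (N : ℕ) (α : ℝ) (hα : 1 < α)
    (q : Fin N → ℝ) (hq : ∀ i, 0 < q i) (hq1 : ∑ i, q i = 1)
    (x y : Fin N → ℝ) (hx : ∀ i, 0 < x i) (hy : ∀ i, 0 < y i) (t : ℝ) :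
    let γ : ℝ → Fin N → ℝ := fun s i => x i ^ (1 - s) * y i ^ s
    let φ : ℝ → ℝ := fun s => Real.log (∑ i, q i ^ α * γ s i ^ (1 - α))
    let wgt : ℝ → Fin N → ℝ :=
      fun s i => q i ^ α * γ s i ^ (1 - α) / ∑ j, q j ^ α * γ s j ^ (1 - α)
    deriv (deriv φ) t = (1 - α) ^ 2 *
        ((∑ i, wgt t i * Real.log (y i / x i) ^ 2)
          - (∑ i, wgt t i * Real.log (y i / x i)) ^ 2) ∧
    0 ≤ deriv (deriv φ) t ∧
    deriv (deriv φ) t ≤ (1 - α) ^ 2 * ∑ i, Real.log (y i / x i) ^ 2 :=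
  stmt_19_general N α q hq x y hx hy t
end
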